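/- arXiv:1201.4138 — 5 statements merged into one kernel-verified Lean document; each statement's English description precedes it below -/
import Mathlib

section
/- Let n be a positive integer, A an indeterminate (or arbitrary integer/real), and B_1, ..., B_n distinct integers. Define the n×n matrix M by M[i][j] = C(A, B_j - i) (binomial coefficient, as a polynomial in A). Then the matrix N defined by N[i][j] = C(A+n-1, B_i - 1)^{-1} * Σ_{k=1}^{j} C(A+n-1, k-1) * C(A-1+j-k, j-k) * (-1)^{k+j} * Π_{l≠i} (k - B_l)/(B_i - B_l) satisfies M * N = I. -/
/-- Generalized binomial coefficient `C(x, m)` for real `x` and integer `m`: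
`x(x-1)⋯(x-m+1)/m!` for `m ≥ 0` and `0` for `m < 0`. -/
noncomputable def gchoose (x : ℝ) (m : ℤ) : ℝ :=
  if m < 0 then 0 else (∏ i ∈ Finset.range m.toNat, (x - i)) / (m.toNat.factorial : ℝ)

namespace HalfHexAux

lemma gchoose_neg (x : ℝ) {m : ℤ} (h : m < 0) : gchoose x m = 0 := by
  simp [gchoose, h]

lemma gchoose_nonneg (x : ℝ) {m : ℤ} (h : 0 ≤ m) :
    gchoose x m = (∏ i ∈ Finset.range m.toNat, (x - i)) / (m.toNat.factorial : ℝ) := by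
  rw [gchoose, if_neg (by omega)]

lemma gchoose_coe (x : ℝ) (k : ℕ) :
    gchoose x (k : ℤ) = (∏ i ∈ Finset.range k, (x - i)) / (k.factorial : ℝ) := by
  simp [gchoose]

lemma descPoch_smeval_real (k : ℕ) (x : ℝ) :
    (descPochhammer ℤ k).smeval x = ∏ i ∈ Finset.range k, (x - i) := by
  induction k with
  | zero => simp [descPochhammer_zero, Polynomial.smeval_one]
  | succ k ih =>
      rw [descPochhammer_succ_right, Polynomial.smeval_mul, ih, Finset.prod_range_succ,
        Polynomial.smeval_sub, Polynomial.smeval_X, Polynomial.smeval_natCast]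
      simp

lemma gchoose_eq_ringChoose (x : ℝ) (k : ℕ) : gchoose x (k : ℤ) = Ring.choose x k := by
  have h := Ring.descPochhammer_eq_factorial_smul_choose x k
  rw [descPoch_smeval_real] at h
  rw [gchoose_coe, h, nsmul_eq_mul]
  field_simp

lemma gchoose_vandermonde (x y : ℝ) (m : ℕ) :
    ∑ k ∈ Finset.range (m + 1), gchoose x (k : ℤ) * gchoose y ((m - k : ℕ) : ℤ)
      = gchoose (x + y) (m : ℤ) := by
  have h := Ring.add_choose_eq (R := ℝ) (r := x) (s := y) m (Commute.all x y)
  rw [Finset.Nat.sum_antidiagonal_eq_sum_range_succ_mk] at h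
  simp only [← gchoose_eq_ringChoose] at h
  rw [h]

lemma gchoose_zero_left (k : ℕ) : gchoose 0 (k : ℤ) = if k = 0 then 1 else 0 := by
  cases k with
  | zero => simp [gchoose]
  | succ k =>
      rw [gchoose_coe]
      rw [Finset.prod_eq_zero (Finset.mem_range.mpr (Nat.succ_pos k)) (by norm_num)]
      simp

lemma gchoose_reflect (x : ℝ) (v : ℕ) :
    gchoose (x - 1 + v) (v : ℤ) = (-1) ^ v * gchoose (-x) (v : ℤ) := by
  rw [gchoose_coe, gchoose_coe, ← Finset.prod_range_reflect]
  have h1 : ∏ j ∈ Finset.range v, (x - 1 + v - ((v - 1 - j : ℕ) : ℝ))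
      = ∏ j ∈ Finset.range v, (x + j) := by
    refine Finset.prod_congr rfl fun j hj => ?_
    have hj' : j < v := Finset.mem_range.mp hj
    rw [Nat.cast_sub (by omega), Nat.cast_sub (by omega)]
    push_cast
    ring
  have h2 : ∏ i ∈ Finset.range v, (-x - (i : ℝ)) = (-1) ^ v * ∏ i ∈ Finset.range v, (x + i) := by
    simp only [show ∀ i : ℕ, -x - (i : ℝ) = -1 * (x + i) from fun i => by ring,
      Finset.prod_mul_distrib, Finset.prod_const, Finset.card_range]
  rw [h1, h2, mul_div_assoc, ← mul_assoc, ← pow_add, Even.neg_one_pow ⟨v, by ring⟩, one_mul]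

lemma prod_range_to_Ioc (f : ℤ → ℝ) (k : ℕ) (b : ℤ) :
    ∏ i ∈ Finset.range k, f (b - i) = ∏ c ∈ Finset.Ioc (b - k) b, f c := by
  refine Finset.prod_bij' (fun i _ => b - i) (fun c _ => (b - c).toNat) ?_ ?_ ?_ ?_ ?_
  all_goals intro a ha
  all_goals simp only [Finset.mem_range, Finset.mem_Ioc] at ha ⊢
  all_goals try omega

lemma prod_range_to_Ioc' (f : ℤ → ℝ) (k : ℕ) (a : ℤ) :
    ∏ i ∈ Finset.range k, f (a + 1 + i) = ∏ c ∈ Finset.Ioc a (a + k), f c := by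
  refine Finset.prod_bij' (fun i _ => a + 1 + i) (fun c _ => (c - a - 1).toNat) ?_ ?_ ?_ ?_ ?_
  all_goals intro x hx
  all_goals simp only [Finset.mem_range, Finset.mem_Ioc] at hx ⊢
  all_goals try omega

lemma prod_Icc_shift (f : ℤ → ℝ) (a b x : ℤ) :
    ∏ s ∈ Finset.Icc a b, f (s - x) = ∏ c ∈ Finset.Ioc (a - 1 - x) (b - x), f c := by
  refine Finset.prod_bij' (fun s _ => s - x) (fun c _ => c + x) ?_ ?_ ?_ ?_ ?_
  all_goals intro a ha
  all_goals simp only [Finset.mem_Icc, Finset.mem_Ioc] at ha ⊢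
  all_goals try omega

lemma prod_Icc_reflect (f : ℤ → ℝ) (a b x : ℤ) :
    ∏ t ∈ Finset.Icc a b, f (x - t) = ∏ c ∈ Finset.Ioc (x - b - 1) (x - a), f c := by
  refine Finset.prod_bij' (fun t _ => x - t) (fun c _ => x - c) ?_ ?_ ?_ ?_ ?_
  all_goals intro a ha
  all_goals simp only [Finset.mem_Icc, Finset.mem_Ioc] at ha ⊢
  all_goals try omega

lemma fact_aux (a k : ℕ) :
    ((a + k).factorial : ℝ) = a.factorial * ∏ i ∈ Finset.range k, ((a : ℝ) + 1 + i) := by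
  induction k with
  | zero => simp
  | succ k ih =>
      rw [Finset.prod_range_succ, ← mul_assoc, ← ih,
        show a + (k + 1) = (a + k) + 1 by omega, Nat.factorial_succ]
      push_cast
      ring

lemma factorial_Ioc (a b : ℤ) (ha : 0 ≤ a) (hab : a ≤ b) :
    (b.toNat.factorial : ℝ) = a.toNat.factorial * ∏ c ∈ Finset.Ioc a b, (c : ℝ) := by
  have hk : b = a + ((b - a).toNat : ℤ) := by omega
  have h1 := prod_range_to_Ioc' (fun c => (c : ℝ)) (b - a).toNat a
  rw [← hk] at h1
  rw [← h1]
  rw [show b.toNat = a.toNat + (b - a).toNat by omega, fact_aux]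
  congr 1
  refine Finset.prod_congr rfl fun i _ => ?_
  push_cast
  have : ((a.toNat : ℝ)) = (a : ℝ) := by
    rw [show (a.toNat : ℝ) = ((a.toNat : ℤ) : ℝ) by push_cast; ring, show (a.toNat : ℤ) = a by omega]
  rw [this]

lemma prod_Ioc_split (f : ℤ → ℝ) {a b c : ℤ} (h1 : a ≤ b) (h2 : b ≤ c) :
    (∏ i ∈ Finset.Ioc a b, f i) * ∏ i ∈ Finset.Ioc b c, f i = ∏ i ∈ Finset.Ioc a c, f i := by
  rw [← Finset.Ioc_union_Ioc_eq_Ioc h1 h2,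
    Finset.prod_union (by
      refine Finset.disjoint_left.2 fun x hx hx' => ?_
      simp only [Finset.mem_Ioc] at hx hx'
      omega)]

lemma star_id (Av : ℝ) (n I x : ℤ) (hn : 1 ≤ n) (hI1 : 1 ≤ I) (hIn : I ≤ n) (hx : 1 ≤ x) :
    gchoose Av (x - I) * ∏ c ∈ Finset.Icc (1 : ℤ) (n - 1), (Av + c)
      = (∏ t ∈ Finset.Icc (1 : ℤ) (I - 1), ((x : ℝ) - t)) *
        (∏ s ∈ Finset.Icc (I + 1) n, (Av + s - x)) * gchoose (Av + n - 1) (x - 1) := by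
  by_cases hxI : x < I
  · rw [gchoose, if_pos (by omega), zero_mul]
    rw [Finset.prod_eq_zero (i := x) (by simp only [Finset.mem_Icc]; omega) (by simp)]
    ring
  · push_neg at hxI
    set F : ℤ → ℝ := fun c => Av + c with hF
    rw [gchoose_nonneg Av (by omega : (0:ℤ) ≤ x - I), gchoose_nonneg _ (by omega : (0:ℤ) ≤ x - 1)]
    have hA1 : ∏ i ∈ Finset.range (x - I).toNat, (Av - i)
        = ∏ c ∈ Finset.Ioc (I - x) 0, F c := by
      have := prod_range_to_Ioc F (x - I).toNat 0
      rw [show ((0:ℤ) - ((x - I).toNat : ℤ)) = I - x by omega] at this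
      rw [← this]
      refine Finset.prod_congr rfl fun i _ => ?_
      simp only [hF]; push_cast; ring
    have hP : ∏ c ∈ Finset.Icc (1 : ℤ) (n - 1), (Av + c) = ∏ c ∈ Finset.Ioc 0 (n - 1), F c := by
      refine Finset.prod_congr ?_ fun c _ => rfl
      ext c; simp only [Finset.mem_Icc, Finset.mem_Ioc]; omega
    have hT2 : ∏ s ∈ Finset.Icc (I + 1) n, (Av + s - x)
        = ∏ c ∈ Finset.Ioc (I - x) (n - x), F c := by
      have := prod_Icc_shift F (I + 1) n x
      rw [show (I + 1 - 1 - x) = I - x by ring] at this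
      rw [← this]
      refine Finset.prod_congr rfl fun s _ => ?_
      simp only [hF]; push_cast; ring
    have hB1 : ∏ i ∈ Finset.range (x - 1).toNat, (Av + n - 1 - i)
        = ∏ c ∈ Finset.Ioc (n - x) (n - 1), F c := by
      have := prod_range_to_Ioc F (x - 1).toNat (n - 1)
      rw [show ((n - 1 : ℤ) - ((x - 1).toNat : ℤ)) = n - x by omega] at this
      rw [← this]
      refine Finset.prod_congr rfl fun i _ => ?_
      simp only [hF]; push_cast; ring
    have hT1 : ∏ t ∈ Finset.Icc (1 : ℤ) (I - 1), ((x : ℝ) - t)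
        = ∏ c ∈ Finset.Ioc (x - I) (x - 1), ((c : ℤ) : ℝ) := by
      have := prod_Icc_reflect (fun c => ((c : ℤ) : ℝ)) 1 (I - 1) x
      rw [show (x - (I - 1) - 1) = x - I by ring] at this
      rw [← this]
      refine Finset.prod_congr rfl fun t _ => ?_
      push_cast; ring
    have hfact : ((x - 1).toNat.factorial : ℝ)
        = (x - I).toNat.factorial * ∏ c ∈ Finset.Ioc (x - I) (x - 1), ((c : ℤ) : ℝ) :=
      factorial_Ioc _ _ (by omega) (by omega)
    rw [hA1, hP, hT2, hB1, hT1]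
    have hfa : ((x - I).toNat.factorial : ℝ) ≠ 0 := Nat.cast_ne_zero.2 (Nat.factorial_ne_zero _)
    have hfb : ((x - 1).toNat.factorial : ℝ) ≠ 0 := Nat.cast_ne_zero.2 (Nat.factorial_ne_zero _)
    rw [div_mul_eq_mul_div, mul_div_assoc, mul_comm _ ((∏ c ∈ Finset.Ioc (n - x) (n - 1), F c) / _),
      div_mul_eq_mul_div, mul_div_assoc']
    rw [div_eq_div_iff hfa hfb, hfact]
    rw [prod_Ioc_split F (by omega : I - x ≤ 0) (by omega : (0:ℤ) ≤ n - 1)]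
    rw [← prod_Ioc_split F (by omega : I - x ≤ n - x) (by omega : n - x ≤ n - 1)]
    ring

lemma gchoose_int_zero {N : ℤ} (hN : 0 ≤ N) {m : ℤ} (h : N < m) : gchoose (N : ℝ) m = 0 := by
  rw [gchoose_nonneg _ (by omega : 0 ≤ m)]
  rw [Finset.prod_eq_zero (i := N.toNat) (Finset.mem_range.mpr (by omega))]
  · simp
  · rw [show ((N.toNat : ℕ) : ℝ) = (N : ℝ) by
      exact_mod_cast congrArg Int.cast (Int.toNat_of_nonneg hN)]
    ring

lemma P_ne_zero (A : ℝ) (n : ℕ) (B : Fin n → ℤ) (hB : Function.Injective B)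
    (hden : ∀ i, gchoose (A + n - 1) (B i - 1) ≠ 0) :
    ∏ c ∈ Finset.Icc (1 : ℤ) ((n : ℤ) - 1), (A + c) ≠ 0 := by
  intro h0
  obtain ⟨c, hc, hAc⟩ := Finset.prod_eq_zero_iff.mp h0
  simp only [Finset.mem_Icc] at hc
  have hA : A = -(c : ℝ) := by linarith
  set N₀ : ℤ := (n : ℤ) - 1 - c with hN₀
  have hAn : A + n - 1 = (N₀ : ℝ) := by rw [hA, hN₀]; push_cast; ring
  have hub : ∀ i, 1 ≤ B i ∧ B i ≤ N₀ + 1 := by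
    intro i
    constructor
    · by_contra h
      exact hden i (gchoose_neg _ (by omega))
    · by_contra h
      exact hden i (hAn ▸ gchoose_int_zero (by omega) (by omega))
  have hcard := Finset.card_le_card_of_injOn (s := (Finset.univ : Finset (Fin n)))
    (t := Finset.Icc (1 : ℤ) (N₀ + 1)) B (fun i _ => Finset.mem_Icc.mpr (hub i)) (hB.injOn)
  rw [Finset.card_univ, Fintype.card_fin, Int.card_Icc] at hcard
  omega

lemma stepC (Av : ℝ) (I J : ℕ) (hI : 1 ≤ I) :
    ∑ k ∈ Finset.Icc 1 J, gchoose Av ((k : ℤ) - I) * gchoose (-Av) ((J : ℤ) - k)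
      = if I = J then 1 else 0 := by
  by_cases hIJ : J < I
  · rw [if_neg (by omega), Finset.sum_eq_zero]
    intro k hk
    simp only [Finset.mem_Icc] at hk
    rw [gchoose_neg _ (by omega : (k : ℤ) - I < 0), zero_mul]
  · push_neg at hIJ
    have hsub : Finset.Icc I J ⊆ Finset.Icc 1 J := by
      intro k hk; simp only [Finset.mem_Icc] at hk ⊢; omega
    rw [← Finset.sum_subset hsub (fun k hk hk' => by
      simp only [Finset.mem_Icc] at hk hk'
      rw [gchoose_neg _ (by omega : (k : ℤ) - I < 0), zero_mul])]
    have hbij : ∑ k ∈ Finset.Icc I J, gchoose Av ((k : ℤ) - I) * gchoose (-Av) ((J : ℤ) - k)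
        = ∑ u ∈ Finset.range ((J - I) + 1),
            gchoose Av (u : ℤ) * gchoose (-Av) (((J - I : ℕ) - u : ℕ) : ℤ) := by
      refine Finset.sum_bij' (fun k _ => k - I) (fun u _ => I + u) ?_ ?_ ?_ ?_ ?_
      all_goals intro a ha
      all_goals simp only [Finset.mem_Icc, Finset.mem_range] at ha ⊢
      all_goals try omega
      congr 2 <;> push_cast <;> omega
    rw [hbij, gchoose_vandermonde, add_neg_cancel, gchoose_zero_left]
    by_cases h : I = J <;> simp [h] <;> omega

lemma lagrange_eval (n : ℕ) (B : Fin n → ℤ) (hB : Function.Injective B) (G : Polynomial ℝ)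
    (hdeg : G.degree < (n : WithBot ℕ)) (w : ℝ) :
    G.eval w = ∑ m : Fin n, G.eval ((B m : ℝ)) *
      ∏ l ∈ Finset.univ.erase m, ((w - (B l : ℝ)) / ((B m : ℝ) - (B l : ℝ))) := by
  set v : Fin n → ℝ := fun m => (B m : ℝ) with hv
  have hinj : Set.InjOn v (Finset.univ : Finset (Fin n)) :=
    fun a _ b _ h => hB (by simpa [hv] using h)
  have hint := Lagrange.eq_interpolate (s := (Finset.univ : Finset (Fin n))) (v := v)
    hinj (by simpa using hdeg)
  conv_lhs => rw [hint]
  rw [Lagrange.interpolate_apply, Polynomial.eval_finset_sum]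
  refine Finset.sum_congr rfl fun m _ => ?_
  rw [Polynomial.eval_mul, Polynomial.eval_C]
  congr 1
  rw [Lagrange.basis, Polynomial.eval_prod]
  refine Finset.prod_congr rfl fun l _ => ?_
  rw [Lagrange.basisDivisor, Polynomial.eval_mul, Polynomial.eval_C, Polynomial.eval_sub,
    Polynomial.eval_X, Polynomial.eval_C, div_eq_inv_mul]

end HalfHexAux

open HalfHexAux in
theorem half_hexagon_matrix_inverse (n : ℕ) (hn : 1 ≤ n) (A : ℝ) (B : Fin n → ℤ)
    (hB : Function.Injective B)
    (hden : ∀ i, gchoose (A + n - 1) (B i - 1) ≠ 0)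
    (M N : Matrix (Fin n) (Fin n) ℝ)
    (hM : ∀ i j, M i j = gchoose A (B j - (i.1 + 1)))
    (hN : ∀ i j, N i j = (gchoose (A + n - 1) (B i - 1))⁻¹ *
      ∑ k ∈ Finset.Icc 1 (j.1 + 1),
        gchoose (A + n - 1) ((k : ℤ) - 1) *
        gchoose (A - 1 + (j.1 + 1) - k) (((j.1 + 1 : ℕ) : ℤ) - k) *
        (-1) ^ (k + (j.1 + 1)) *
        ∏ l ∈ Finset.univ.erase i, ((k : ℝ) - B l) / ((B i : ℝ) - B l)) :
    M * N = 1 := by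
  have hB1 : ∀ m, 1 ≤ B m := by
    intro m; by_contra h
    exact hden m (gchoose_neg _ (by omega))
  have hP : (∏ c ∈ Finset.Icc (1:ℤ) ((n:ℤ) - 1), (A + c)) ≠ 0 := P_ne_zero A n B hB hden
  ext i j
  rw [Matrix.mul_apply, Matrix.one_apply]
  set G : Polynomial ℝ := Polynomial.C (∏ c ∈ Finset.Icc (1:ℤ) ((n:ℤ) - 1), (A + c))⁻¹ *
      (∏ t ∈ Finset.Icc (1:ℤ) ((i.1:ℤ) + 1 - 1), (Polynomial.X - Polynomial.C (t:ℝ))) *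
      (∏ s ∈ Finset.Icc ((i.1:ℤ) + 1 + 1) (n:ℤ), (Polynomial.C (A + s) - Polynomial.X)) with hGdef
  -- degree bound
  have hdeg : G.degree < (n : WithBot ℕ) := by
    have hc1 : (Finset.Icc (1:ℤ) ((i.1:ℤ) + 1 - 1)).card = i.1 := by
      rw [Int.card_Icc]; omega
    have hc2 : (Finset.Icc ((i.1:ℤ) + 1 + 1) (n:ℤ)).card = n - (i.1 + 1) := by
      rw [Int.card_Icc]; have := i.2; omega
    have h1 : (∏ t ∈ Finset.Icc (1:ℤ) ((i.1:ℤ) + 1 - 1),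
        (Polynomial.X - Polynomial.C (t:ℝ))).natDegree ≤ i.1 := by
      refine le_trans (Polynomial.natDegree_prod_le _ _) ?_
      rw [← hc1]
      refine le_trans (Finset.sum_le_card_nsmul _ _ 1 fun t _ => ?_) (by simp)
      exact le_of_eq (Polynomial.natDegree_X_sub_C _)
    have h2 : (∏ s ∈ Finset.Icc ((i.1:ℤ) + 1 + 1) (n:ℤ),
        (Polynomial.C (A + s) - Polynomial.X)).natDegree ≤ n - (i.1 + 1) := by
      refine le_trans (Polynomial.natDegree_prod_le _ _) ?_
      rw [← hc2]
      refine le_trans (Finset.sum_le_card_nsmul _ _ 1 fun s _ => ?_) (by simp)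
      rw [show Polynomial.C (A + (s:ℝ)) - Polynomial.X
        = -(Polynomial.X - Polynomial.C (A + s)) by ring, Polynomial.natDegree_neg]
      exact le_of_eq (Polynomial.natDegree_X_sub_C _)
    have hnd : G.natDegree ≤ n - 1 := by
      refine le_trans Polynomial.natDegree_mul_le ?_
      have := le_trans (Polynomial.natDegree_mul_le
        (p := Polynomial.C (∏ c ∈ Finset.Icc (1:ℤ) ((n:ℤ) - 1), (A + c))⁻¹)
        (q := ∏ t ∈ Finset.Icc (1:ℤ) ((i.1:ℤ) + 1 - 1), (Polynomial.X - Polynomial.C (t:ℝ))))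
        (add_le_add (le_of_eq (Polynomial.natDegree_C _)) h1)
      have hlt : i.1 < n := i.2
      omega
    calc G.degree ≤ (G.natDegree : WithBot ℕ) := Polynomial.degree_le_natDegree
      _ < (n : WithBot ℕ) := by
          exact_mod_cast lt_of_le_of_lt hnd (by omega : n - 1 < n)
  -- evaluation of G
  have hGeval : ∀ w : ℝ, G.eval w = (∏ c ∈ Finset.Icc (1:ℤ) ((n:ℤ) - 1), (A + c))⁻¹ *
      (∏ t ∈ Finset.Icc (1:ℤ) ((i.1:ℤ) + 1 - 1), (w - (t:ℝ))) *
      (∏ s ∈ Finset.Icc ((i.1:ℤ) + 1 + 1) (n:ℤ), (A + (s:ℝ) - w)) := by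
    intro w
    rw [hGdef]
    simp only [Polynomial.eval_mul, Polynomial.eval_C, Polynomial.eval_prod,
      Polynomial.eval_sub, Polynomial.eval_X]
  -- key identity
  have hkey : ∀ x : ℤ, 1 ≤ x →
      G.eval (x:ℝ) * gchoose (A + n - 1) (x - 1) = gchoose A (x - ((i.1:ℤ) + 1)) := by
    intro x hx
    have hstar := star_id A (n:ℤ) ((i.1:ℤ) + 1) x (by exact_mod_cast hn) (by omega)
      (by have := i.2; omega) hx
    push_cast at hstar
    rw [hGeval]
    rw [mul_assoc, mul_assoc,
      ← mul_assoc (∏ t ∈ Finset.Icc (1:ℤ) ((i.1:ℤ) + 1 - 1), ((x:ℝ) - t)), ← hstar]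
    field_simp
  -- main computation
  have key : (∑ m, M i m * N m j)
      = ∑ k ∈ Finset.Icc 1 (j.1 + 1), gchoose A ((k : ℤ) - ((i.1 + 1 : ℕ) : ℤ))
          * gchoose (-A) (((j.1 + 1 : ℕ) : ℤ) - (k : ℤ)) := by
    have step1 : (∑ m, M i m * N m j) = ∑ m, G.eval ((B m : ℝ)) *
        ∑ k ∈ Finset.Icc 1 (j.1 + 1),
          gchoose (A + n - 1) ((k : ℤ) - 1) *
          gchoose (A - 1 + (j.1 + 1) - k) (((j.1 + 1 : ℕ) : ℤ) - k) *
          (-1) ^ (k + (j.1 + 1)) *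
          ∏ l ∈ Finset.univ.erase m, ((k : ℝ) - B l) / ((B m : ℝ) - B l) := by
      refine Finset.sum_congr rfl fun m _ => ?_
      rw [hM, hN, ← hkey (B m) (hB1 m)]
      rw [mul_assoc, ← mul_assoc (gchoose (A + n - 1) (B m - 1)),
        mul_inv_cancel₀ (hden m), one_mul]
    rw [step1]
    have step2 : ∀ k ∈ Finset.Icc 1 (j.1 + 1),
        (∑ m : Fin n, G.eval ((B m : ℝ)) *
          (gchoose (A + n - 1) ((k : ℤ) - 1) *
           gchoose (A - 1 + (j.1 + 1) - k) (((j.1 + 1 : ℕ) : ℤ) - k) *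
           (-1) ^ (k + (j.1 + 1)) *
           ∏ l ∈ Finset.univ.erase m, ((k : ℝ) - B l) / ((B m : ℝ) - B l)))
        = gchoose A ((k : ℤ) - ((i.1 + 1 : ℕ) : ℤ))
            * gchoose (-A) (((j.1 + 1 : ℕ) : ℤ) - (k : ℤ)) := by
      intro k hk
      simp only [Finset.mem_Icc] at hk
      have hlag := lagrange_eval n B hB G hdeg ((k : ℕ) : ℝ)
      have hsum : (∑ m : Fin n, G.eval ((B m : ℝ)) *
          (gchoose (A + n - 1) ((k : ℤ) - 1) *
           gchoose (A - 1 + (j.1 + 1) - k) (((j.1 + 1 : ℕ) : ℤ) - k) *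
           (-1) ^ (k + (j.1 + 1)) *
           ∏ l ∈ Finset.univ.erase m, ((k : ℝ) - B l) / ((B m : ℝ) - B l)))
          = (gchoose (A + n - 1) ((k : ℤ) - 1) *
             gchoose (A - 1 + (j.1 + 1) - k) (((j.1 + 1 : ℕ) : ℤ) - k) *
             (-1) ^ (k + (j.1 + 1))) * G.eval ((k : ℕ) : ℝ) := by
        rw [hlag, Finset.mul_sum]
        refine Finset.sum_congr rfl fun m _ => by ring
      rw [hsum]
      -- now use hkey and reflection
      have h2 := hkey (k : ℤ) (by exact_mod_cast hk.1)
      push_cast at h2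
      set v : ℕ := j.1 + 1 - k with hv
      have hv1 : (v : ℝ) = (j.1 : ℝ) + 1 - (k : ℝ) := by
        rw [hv]; push_cast [Nat.cast_sub hk.2]; ring
      have hv2 : ((j.1 + 1 : ℕ) : ℤ) - (k : ℤ) = (v : ℤ) := by omega
      have hrefl : gchoose (A - 1 + ((j.1 : ℝ) + 1) - (k : ℝ)) (((j.1 + 1 : ℕ) : ℤ) - (k : ℤ))
          = (-1) ^ v * gchoose (-A) (((j.1 + 1 : ℕ) : ℤ) - (k : ℤ)) := by
        rw [hv2, show A - 1 + ((j.1 : ℝ) + 1) - (k : ℝ) = A - 1 + (v : ℝ) by rw [hv1]; ring]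
        exact gchoose_reflect A v
      calc gchoose (A + n - 1) ((k : ℤ) - 1) *
             gchoose (A - 1 + ((j.1 : ℝ) + 1) - (k : ℝ)) (((j.1 + 1 : ℕ) : ℤ) - (k : ℤ)) *
             (-1) ^ (k + (j.1 + 1)) * G.eval ((k : ℕ) : ℝ)
          = (G.eval ((k : ℕ) : ℝ) * gchoose (A + n - 1) ((k : ℤ) - 1)) *
            (gchoose (A - 1 + ((j.1 : ℝ) + 1) - (k : ℝ)) (((j.1 + 1 : ℕ) : ℤ) - (k : ℤ)) *
             (-1) ^ (k + (j.1 + 1))) := by ring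
        _ = gchoose A ((k : ℤ) - ((i.1 : ℤ) + 1)) *
            (((-1) ^ v * gchoose (-A) (((j.1 + 1 : ℕ) : ℤ) - (k : ℤ))) *
             (-1) ^ (k + (j.1 + 1))) := by rw [h2, hrefl]
        _ = gchoose A ((k : ℤ) - ((i.1 : ℤ) + 1)) *
            gchoose (-A) (((j.1 + 1 : ℕ) : ℤ) - (k : ℤ)) *
            ((-1) ^ v * (-1) ^ (k + (j.1 + 1))) := by ring
        _ = gchoose A ((k : ℤ) - ((i.1 + 1 : ℕ) : ℤ)) *
            gchoose (-A) (((j.1 + 1 : ℕ) : ℤ) - (k : ℤ)) := by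
            rw [← pow_add, Even.neg_one_pow ⟨j.1 + 1, by omega⟩, mul_one]
            norm_num
    calc (∑ m : Fin n, G.eval ((B m : ℝ)) *
        ∑ k ∈ Finset.Icc 1 (j.1 + 1),
          gchoose (A + n - 1) ((k : ℤ) - 1) *
          gchoose (A - 1 + (j.1 + 1) - k) (((j.1 + 1 : ℕ) : ℤ) - k) *
          (-1) ^ (k + (j.1 + 1)) *
          ∏ l ∈ Finset.univ.erase m, ((k : ℝ) - B l) / ((B m : ℝ) - B l))
        = ∑ k ∈ Finset.Icc 1 (j.1 + 1), ∑ m : Fin n, G.eval ((B m : ℝ)) *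
            (gchoose (A + n - 1) ((k : ℤ) - 1) *
             gchoose (A - 1 + (j.1 + 1) - k) (((j.1 + 1 : ℕ) : ℤ) - k) *
             (-1) ^ (k + (j.1 + 1)) *
             ∏ l ∈ Finset.univ.erase m, ((k : ℝ) - B l) / ((B m : ℝ) - B l)) := by
          simp only [Finset.mul_sum]
          rw [Finset.sum_comm]
      _ = ∑ k ∈ Finset.Icc 1 (j.1 + 1), gchoose A ((k : ℤ) - ((i.1 + 1 : ℕ) : ℤ))
            * gchoose (-A) (((j.1 + 1 : ℕ) : ℤ) - (k : ℤ)) :=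
          Finset.sum_congr rfl step2
  rw [key, stepC A (i.1 + 1) (j.1 + 1) (by omega)]
  by_cases h : i = j
  · rw [if_pos h, if_pos (by omega : i.1 + 1 = j.1 + 1)]
  · rw [if_neg h, if_neg (fun hc => h (Fin.ext (by omega)))]
end

section
/- Let n be a positive integer, A a real number, and L_1, ..., L_n integers such that all binomial coefficients below are defined. Then det[ C(A, L_i + j) ]_{i,j=1}^{n} = (Π_{1≤i<j≤n} (L_i - L_j) · Π_{i=1}^{n} (A+i-1)!) / (Π_{i=1}^{n} (L_i + n)! · Π_{i=1}^{n} (A - L_i - 1)!). -/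
/-!
Pascal's rule, applied as column operations, turns the columns `C(A, Lᵢ + j)` into
`C(A + n - j, Lᵢ + n)`, the upper argument now varying with the column and the lower one with
the row. Multiplying row `i` by `(Lᵢ + n)! (A - Lᵢ - 1)!` and dividing column `j` by
`(A + n - j)!` leaves in column `j` the product of the `j - 1` factors `A - 1 - t - Lᵢ`,
`0 ≤ t < j - 1`: a monic polynomial of degree `j - 1` in `-Lᵢ`. The remaining determinant is
therefore a Vandermonde determinant in the points `-Lᵢ`.
-/

/-- Binomial coefficient `C(m, k)` for natural `m` and integer `k`, zero for `k < 0`. -/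
def zchoose (m : ℕ) (k : ℤ) : ℕ := if 0 ≤ k then m.choose k.toNat else 0

open Finset Matrix Polynomial Nat

theorem zchoose_succ (m : ℕ) (k : ℤ) : zchoose (m + 1) k = zchoose m k + zchoose m (k - 1) := by
  rcases lt_trichotomy k 0 with hk | rfl | hk
  · simp [zchoose, hk.not_ge, show ¬ 1 ≤ k by omega]
  · simp [zchoose]
  · have hk' : k.toNat = (k - 1).toNat + 1 := by omega
    simp only [zchoose, hk.le, show 0 ≤ k - 1 by omega, if_true, hk', choose_succ_succ', add_comm]

theorem zchoose_add_eq_sum (m s : ℕ) (k : ℤ) :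
    zchoose (m + s) k = ∑ t ∈ range (s + 1), s.choose t * zchoose m (k - t) := by
  induction s generalizing k with
  | zero => simp
  | succ s ih =>
    have pascal := sum_choose_succ_mul (R := ℕ) (fun t _ => zchoose m (k - t)) s
    simp only [Nat.cast_id] at pascal
    rw [← add_assoc, zchoose_succ, ih, ih, pascal]
    congr 1
    refine sum_congr rfl fun t _ => ?_
    rw [Nat.cast_succ, sub_add_eq_sub_sub, sub_right_comm]

variable {R : Type*} [CommRing R]

theorem choose_mul_factorial_mul_factorial_add (b j l : ℕ) (h : l ≤ b + j) :
    (b.choose l : R) * l ! * (b + j - l)! =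
      b ! * ∏ t ∈ range j, (((b + j - t : ℕ) : R) - l) := by
  induction j with
  | zero =>
    rw [add_zero] at h ⊢
    rw [prod_range_zero, mul_one]
    exact_mod_cast congrArg (Nat.cast : ℕ → R) (choose_mul_factorial_mul_factorial h)
  | succ j ih =>
    rw [prod_range_succ', ← add_assoc, Nat.sub_zero]
    simp only [Nat.add_sub_add_right]
    rcases h.lt_or_eq with h | rfl
    · rw [show b + j + 1 - l = (b + j - l) + 1 by omega, factorial_succ]
      push_cast [Nat.cast_sub (by omega : l ≤ b + j)]
      linear_combination ((b + j + 1 : R) - l) * ih (by omega)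
    · rw [choose_eq_zero_of_lt (by omega : b < b + (j + 1))]
      push_cast
      ring

theorem det_prod_range_add {n : ℕ} (y : Fin n → R) (c : ℕ → R) :
    det (of fun i j : Fin n => ∏ t ∈ range j, (y i + c t)) =
      ∏ i, ∏ j ∈ Ioi i, (y j - y i) := by
  nontriviality R
  have hmonic : ∀ j, (∏ t ∈ range j, (X + C (c t))).Monic :=
    fun j => monic_prod_of_monic _ _ fun t _ => monic_X_add_C _
  have hdeg : ∀ j, (∏ t ∈ range j, (X + C (c t))).natDegree = j := fun j => by
    rw [natDegree_prod_of_monic _ _ fun t _ => monic_X_add_C _]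
    simp
  rw [← det_vandermonde, det_eval_matrixOfPolynomials_eq_det_vandermonde y
    (fun j => ∏ t ∈ range j, (X + C (c t))) (fun j => hdeg j) (fun j => hmonic j)]
  simp [eval_prod]

theorem zchoose_add_eq_sum_fin (m : ℕ) {n s : ℕ} (hs : s < n) (k : ℤ) :
    (zchoose (m + s) (k + n) : R) =
      ∑ j : Fin n, (zchoose m (k + (j.1 + 1)) : R) * (s.choose (n - 1 - j) : R) := by
  rw [Fin.sum_univ_eq_sum_range (fun j => (zchoose m (k + (j + 1)) : R) * s.choose (n - 1 - j)),
    ← sum_range_reflect, ← sum_subset (range_subset_range.2 hs), zchoose_add_eq_sum]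
  · push_cast
    refine sum_congr rfl fun t ht => ?_
    have ht : t < s + 1 := mem_range.1 ht
    rw [mul_comm, show n - 1 - (n - 1 - t) = t by omega]
    congr 3
    push_cast [show t ≤ n - 1 by omega, show 1 ≤ n by omega]
    ring
  · intro t htn ht
    rw [mem_range] at htn ht
    rw [choose_eq_zero_of_lt (by omega), Nat.cast_zero, mul_zero]

theorem det_zchoose_eq_det_zchoose_add {n : ℕ} (m : ℕ) (k : Fin n → ℤ) :
    det (of fun i j : Fin n => (zchoose m (k i + (j.1 + 1)) : R)) =
      det (of fun i j : Fin n => (zchoose (m + (n - 1 - j)) (k i + n) : R)) := by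
  set T : Matrix (Fin n) (Fin n) R := of fun j' j => ((n - 1 - j).choose (n - 1 - j') : R)
  have hT : T.det = 1 := by
    rw [det_of_isLowerTriangular T fun j' j (h : j' < j) => by
      simp [T, choose_eq_zero_of_lt (by omega : n - 1 - j < n - 1 - j')]]
    simp [T]
  rw [← mul_one (det _), ← hT, ← det_mul]
  congr 1
  ext i j
  rw [mul_apply, of_apply, zchoose_add_eq_sum_fin m (by omega)]
  rfl

theorem det_choose_sub_mul_prod_factorial {n : ℕ} (M : ℕ) (l : Fin n → ℕ) (hn : n ≤ M + 1)
    (hl : ∀ i, l i ≤ M) :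
    det (of fun i j : Fin n => ((M - j).choose (l i) : R)) * ∏ i, ((l i)! * (M - l i)! : R) =
      (∏ j : Fin n, ((M - j)! : R)) * ∏ i, ∏ j ∈ Ioi i, ((l i : R) - l j) := by
  have hentry (i j : Fin n) : ((l i)! * (M - l i)! : R) * (M - j).choose (l i) =
      (M - j)! * ∏ t ∈ range j, (-(l i : R) + (M - t : ℕ)) := by
    have := j.isLt
    have := hl i
    have h := choose_mul_factorial_mul_factorial_add (R := R) (M - j) j (l i) (by omega)
    rw [Nat.sub_add_cancel (by omega)] at h
    simp only [neg_add_eq_sub]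
    linear_combination h
  calc _ = det (of fun i j : Fin n =>
          ((M - j)! : R) * ∏ t ∈ range j, (-(l i : R) + (M - t : ℕ))) := by
        rw [mul_comm, ← det_mul_column]
        congr 1
        ext i j
        exact hentry i j
    _ = (∏ j : Fin n, ((M - j)! : R)) *
          det (of fun i j : Fin n => ∏ t ∈ range j, (-(l i : R) + (M - t : ℕ))) :=
        det_mul_row _ _
    _ = _ := by
        rw [det_prod_range_add]
        simp only [neg_sub_neg]

theorem krattenthaler_binomial_det_general (n : ℕ) (A : ℕ) (L : Fin n → ℤ)
    (hL₁ : ∀ i, 0 ≤ L i + n) (hL₂ : ∀ i, L i + 1 ≤ A) :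
    Matrix.det (Matrix.of fun i j : Fin n => (zchoose A (L i + (j.1 + 1)) : ℚ)) =
      ((∏ i : Fin n, ∏ j ∈ Finset.Ioi i, ((L i - L j : ℤ) : ℚ)) *
        ∏ i : Fin n, (Nat.factorial (A + i.1) : ℚ)) /
      ((∏ i : Fin n, (Nat.factorial (L i + n).toNat : ℚ)) *
        ∏ i : Fin n, (Nat.factorial ((A : ℤ) - L i - 1).toNat : ℚ)) := by
  obtain ⟨l, hl⟩ : ∃ l : Fin n → ℕ, ∀ i, (l i : ℤ) = L i + n :=
    ⟨fun i => (L i + n).toNat, fun i => Int.toNat_of_nonneg (hL₁ i)⟩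
  have hlA (i : Fin n) : (L i + n).toNat = l i ∧ ((A : ℤ) - L i - 1).toNat = A + n - 1 - l i ∧
      l i ≤ A + n - 1 := by
    have := hl i
    have := hL₂ i
    omega
  have hcol : det (of fun i j : Fin n => (zchoose A (L i + (j.1 + 1)) : ℚ)) =
      det (of fun i j : Fin n => ((A + n - 1 - j).choose (l i) : ℚ)) := by
    rw [det_zchoose_eq_det_zchoose_add]
    congr 1
    ext i j
    simp only [of_apply, zchoose, if_pos (hL₁ i), show A + (n - 1 - j) = A + n - 1 - j by omega,
      (hlA i).1]
  have hfac : ∏ i, ((L i + n).toNat ! * ((A : ℤ) - L i - 1).toNat ! : ℚ) =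
      ∏ i, ((l i)! * (A + n - 1 - l i)! : ℚ) :=
    prod_congr rfl fun i _ => by rw [(hlA i).1, (hlA i).2.1]
  have hrev : ∏ j : Fin n, ((A + n - 1 - j)! : ℚ) = ∏ i : Fin n, ((A + i)! : ℚ) := by
    rw [← Equiv.prod_comp Fin.revPerm]
    refine prod_congr rfl fun i _ => ?_
    rw [Fin.revPerm_apply, Fin.val_rev, show A + n - 1 - (n - (i + 1)) = A + i by omega]
  have hvand : ∏ i : Fin n, ∏ j ∈ Ioi i, ((l i : ℚ) - l j) =
      ∏ i : Fin n, ∏ j ∈ Ioi i, ((L i - L j : ℤ) : ℚ) := by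
    refine prod_congr rfl fun i _ => prod_congr rfl fun j _ => ?_
    have h : (l i : ℤ) - l j = L i - L j := by rw [hl, hl]; ring
    exact_mod_cast congrArg (Int.cast : ℤ → ℚ) h
  rw [hcol, eq_div_iff (by positivity), ← prod_mul_distrib, hfac,
    det_choose_sub_mul_prod_factorial (A + n - 1) l (by omega) fun i => (hlA i).2.2, hrev, hvand,
    mul_comm]

/-- Krattenthaler's determinant evaluation (special case of equation (3.12) of
"Advanced Determinant Calculus"):
`det[C(A, Lᵢ + j)] = (Π_{i<j}(Lᵢ-Lⱼ) Π (A+i-1)!) / (Π (Lᵢ+n)! Π (A-Lᵢ-1)!)`. -/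
theorem krattenthaler_binomial_det (n : ℕ) (hn : 1 ≤ n) (A : ℕ) (L : Fin n → ℤ)
    (hL₁ : ∀ i, 0 ≤ L i + n) (hL₂ : ∀ i, L i + 1 ≤ A) :
    Matrix.det (Matrix.of fun i j : Fin n => (zchoose A (L i + (j.1 + 1)) : ℚ)) =
      ((∏ i : Fin n, ∏ j ∈ Finset.Ioi i, ((L i - L j : ℤ) : ℚ)) *
        ∏ i : Fin n, (Nat.factorial (A + i.1) : ℚ)) /
      ((∏ i : Fin n, (Nat.factorial (L i + n).toNat : ℚ)) *
        ∏ i : Fin n, (Nat.factorial ((A : ℤ) - L i - 1).toNat : ℚ)) :=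
  krattenthaler_binomial_det_general n A L hL₁ hL₂
end

section
/- The determinant of the n×n matrix with (i,j)-entry C(n+1, 2j - i) equals 2^{n(n+1)/2}. -/
open Finset Polynomial

lemma zchoose_coe (m a : ℕ) : zchoose m (a : ℤ) = m.choose a := by
  simp [zchoose]

lemma zchoose_neg (m : ℕ) {k : ℤ} (h : k < 0) : zchoose m k = 0 := by
  simp [zchoose, not_le.2 h]

lemma zchoose_pascal (N : ℕ) (t : ℤ) :
    (zchoose (N + 1) t : ℤ) = zchoose N t + zchoose N (t - 1) := by
  rcases lt_trichotomy t 0 with h | h | h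
  · rw [zchoose_neg _ h, zchoose_neg _ h, zchoose_neg _ (by omega)]; norm_num
  · subst h
    rw [zchoose_neg _ (by norm_num : (0:ℤ) - 1 < 0)]
    simp [zchoose]
  · obtain ⟨a, rfl⟩ : ∃ a : ℕ, t = (a : ℤ) + 1 := by
      refine ⟨(t - 1).toNat, by omega⟩
    have h1 : ((a : ℤ) + 1) = ((a + 1 : ℕ) : ℤ) := by push_cast; ring
    have h2 : (((a + 1 : ℕ) : ℤ)) - 1 = ((a : ℕ) : ℤ) := by push_cast; ring
    rw [h1, h2, zchoose_coe, zchoose_coe, zchoose_coe, Nat.choose_succ_succ]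
    push_cast; ring

/-- The key telescoping lemma. -/
lemma Tsum_eq (d : ℕ) : ∀ (N : ℕ) (m : ℤ),
    ∑ k ∈ Finset.range (d + 1),
      (-1 : ℤ) ^ (d + k) * (d.choose k : ℤ) * (zchoose (N + k) m : ℤ)
      = zchoose N (m - d) := by
  induction d with
  | zero => intro N m; simp
  | succ d ih =>
    intro N m
    rw [Finset.sum_range_succ']
    have hsplit : ∀ k ∈ Finset.range (d + 1),
        (-1 : ℤ) ^ (d + 1 + (k + 1)) * ((d+1).choose (k+1) : ℤ) * (zchoose (N + (k+1)) m : ℤ)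
        = (-1 : ℤ) ^ (d + k) * (d.choose k : ℤ) * (zchoose (N + 1 + k) m : ℤ)
          + (-1 : ℤ) ^ (d + k) * (d.choose (k+1) : ℤ) * (zchoose (N + 1 + k) m : ℤ) := by
      intro k _
      have h1 : (-1 : ℤ) ^ (d + 1 + (k + 1)) = (-1 : ℤ) ^ (d + k) := by
        rw [show d + 1 + (k + 1) = d + k + 2 by ring, pow_add]; norm_num
      have h2 : N + (k + 1) = N + 1 + k := by ring
      rw [h1, h2, Nat.choose_succ_succ]
      push_cast; ring
    rw [Finset.sum_congr rfl hsplit, Finset.sum_add_distrib, ih (N + 1) m]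
    have hB : ∑ k ∈ Finset.range (d + 1),
        (-1 : ℤ) ^ (d + k) * (d.choose (k+1) : ℤ) * (zchoose (N + 1 + k) m : ℤ)
        + (-1 : ℤ) ^ (d + 1 + 0) * ((d+1).choose 0 : ℤ) * (zchoose (N + 0) m : ℤ)
        = -(zchoose N (m - d) : ℤ) := by
      rw [← ih N m, ← Finset.sum_neg_distrib]
      rw [Finset.sum_range_succ'  (fun k => -((-1 : ℤ) ^ (d + k) * (d.choose k : ℤ) * (zchoose (N + k) m : ℤ)))]
      rw [Finset.sum_range_succ]
      simp only [Nat.choose_succ_self, Nat.cast_zero, mul_zero, zero_mul, add_zero,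
        Nat.choose_zero_right, Nat.cast_one, mul_one, Nat.add_zero]
      congr 1
      · refine Finset.sum_congr rfl fun k _ => ?_
        have : (-1:ℤ) ^ (d + (k+1)) = -(-1:ℤ)^(d+k) := by
          rw [show d + (k+1) = (d+k)+1 by ring, pow_succ]; ring
        rw [this]
        have h2 : N + (k + 1) = N + 1 + k := by ring
        rw [h2]; ring
      · have : (-1:ℤ) ^ (d + 1) = -(-1:ℤ)^(d+0) := by
          rw [pow_succ]; ring_nf
        rw [this]; ring
    rw [add_assoc, hB]
    rw [zchoose_pascal N (m - d)]
    have : m - (d : ℤ) - 1 = m - ((d : ℕ) + 1 : ℕ) := by push_cast; ring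
    rw [← this]; ring

/-- Hockey stick. -/
lemma hockey (a m : ℕ) : ∀ K : ℕ,
    ∑ k ∈ Finset.range K, ((a + k).choose m : ℤ)
      = ((a + K).choose (m + 1) : ℤ) - (a.choose (m + 1) : ℤ) := by
  intro K
  induction K with
  | zero => simp
  | succ K ih =>
    rw [Finset.sum_range_succ, ih, show a + (K + 1) = (a + K) + 1 by ring,
      Nat.choose_succ_succ']
    push_cast; ring

lemma binom_sum (n : ℕ) :
    ∑ i ∈ Finset.range (n + 1), (-1 : ℤ) ^ i * (n.choose i : ℤ) * 2 ^ (n - i) = 1 := by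
  have h : ((-1 : ℤ) + 2) ^ n
      = ∑ i ∈ Finset.range (n + 1), (-1:ℤ) ^ i * 2 ^ (n - i) * (n.choose i : ℤ) :=
    add_pow (-1 : ℤ) 2 n
  have h2 : ((-1 : ℤ) + 2) ^ n = 1 := by norm_num
  rw [h2] at h
  conv_rhs => rw [h]
  exact Finset.sum_congr rfl fun i _ => by ring

/-- Polynomial identity: `∑ (-1)^i C(n,i) 2^(n-i) (X+1)^(n+i) = (1-X²)^n`. -/
lemma poly_id (n : ℕ) :
    ∑ i ∈ Finset.range (n + 1),
      Polynomial.C ((-1 : ℤ) ^ i * (n.choose i : ℤ) * 2 ^ (n - i)) * (X + 1) ^ (n + i)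
      = (1 - X ^ 2 : ℤ[X]) ^ n := by
  have h1 : (1 - X ^ 2 : ℤ[X]) ^ n = (-(X + 1) + 2) ^ n * (X + 1) ^ n := by
    rw [← mul_pow]; ring_nf
  rw [h1, add_pow, Finset.sum_mul]
  refine Finset.sum_congr rfl fun i hi => ?_
  have hneg : (-(X + 1) : ℤ[X]) ^ i = (-1 : ℤ[X]) ^ i * (X + 1) ^ i := by
    rw [neg_pow]
  have hC : Polynomial.C ((-1 : ℤ) ^ i * (n.choose i : ℤ) * 2 ^ (n - i))
      = (-1 : ℤ[X]) ^ i * ((n.choose i : ℕ) : ℤ[X]) * 2 ^ (n - i) := by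
    rw [map_mul, map_mul, map_pow, map_neg, map_one, map_pow, map_ofNat,
      Polynomial.C_eq_natCast]
  rw [hC, hneg, pow_add]
  ring

/-- Odd coefficients of `(1-X²)^n` vanish: the alternating sum identity. -/
lemma odd_sum_zero (n j : ℕ) :
    ∑ i ∈ Finset.range (n + 1),
      (-1 : ℤ) ^ i * (n.choose i : ℤ) * 2 ^ (n - i) * ((n + i).choose (2 * j + 1) : ℤ) = 0 := by
  have h := congrArg (fun p : ℤ[X] => p.coeff (2 * j + 1)) (poly_id n)
  simp only [finset_sum_coeff, coeff_C_mul, coeff_X_add_one_pow] at h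
  rw [show ∑ i ∈ Finset.range (n + 1),
      (-1 : ℤ) ^ i * (n.choose i : ℤ) * 2 ^ (n - i) * ((n + i).choose (2 * j + 1) : ℤ)
      = ∑ i ∈ Finset.range (n + 1),
        (-1 : ℤ) ^ i * (n.choose i : ℤ) * 2 ^ (n - i) * (((n + i).choose (2 * j + 1) : ℕ) : ℤ)
      from rfl, h]
  have h4 : (1 - X ^ 2 : ℤ[X]) ^ n = (-X^2 + 1) ^ n := by ring_nf
  rw [h4, add_pow]
  rw [finset_sum_coeff]
  refine Finset.sum_eq_zero fun t _ => ?_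
  have : (-X^2 : ℤ[X]) ^ t * 1 ^ (n - t) * (n.choose t : ℤ[X])
      = Polynomial.C ((-1:ℤ)^t * (n.choose t : ℤ)) * X ^ (2 * t) := by
    rw [neg_pow, one_pow, map_mul, map_pow, map_neg, map_one,
      Polynomial.C_eq_natCast, ← pow_mul]
    ring
  rw [this, coeff_C_mul, coeff_X_pow, if_neg (by omega)]
  ring

lemma sum_swap_tri (F : ℕ → ℕ → ℤ) : ∀ n : ℕ,
    ∑ k ∈ Finset.range n, ∑ i ∈ Finset.range (k + 1), F i k
      = ∑ i ∈ Finset.range n, ∑ k ∈ Finset.Ico i n, F i k := by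
  intro n
  induction n with
  | zero => simp
  | succ n ih =>
    rw [Finset.sum_range_succ, ih]
    conv_rhs => rw [Finset.sum_range_succ]
    have h1 : ∀ i ∈ Finset.range n, ∑ k ∈ Finset.Ico i (n+1), F i k
        = ∑ k ∈ Finset.Ico i n, F i k + F i n := by
      intro i hi
      rw [Finset.sum_Ico_succ_top (le_of_lt (Finset.mem_range.1 hi))]
    rw [Finset.sum_congr rfl h1, Finset.sum_add_distrib]
    have h2 : ∑ k ∈ Finset.Ico n (n+1), F n k = F n n := by
      rw [Finset.sum_Ico_succ_top le_rfl]; simp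
    rw [h2, Finset.sum_range_succ]
    ring

def ccoef (n k : ℕ) : ℤ :=
  (∑ i ∈ Finset.range (k + 1), (-1 : ℤ) ^ i * (n.choose i : ℤ) * 2 ^ (n - i)) - 1
    + (if k = 0 then 1 else 0)

lemma ccoef_zero (n : ℕ) : ccoef n 0 = 2 ^ n := by
  simp [ccoef]

/-- The key row identity: `C(n+1, 2j+1) = ∑_k ccoef n k · C(n+k, 2j)`. -/
lemma key_row (n j : ℕ) (hn : 0 < n) :
    ∑ k ∈ Finset.range n, ccoef n k * ((n + k).choose (2 * j) : ℤ)
      = ((n + 1).choose (2 * j + 1) : ℤ) := by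
  have hsplit : ∑ k ∈ Finset.range n, ccoef n k * ((n + k).choose (2 * j) : ℤ)
      = (∑ k ∈ Finset.range n, ∑ i ∈ Finset.range (k + 1),
          ((-1 : ℤ) ^ i * (n.choose i : ℤ) * 2 ^ (n - i)) * ((n + k).choose (2 * j) : ℤ))
        - (∑ k ∈ Finset.range n, ((n + k).choose (2 * j) : ℤ))
        + (∑ k ∈ Finset.range n,
            (if k = 0 then 1 else 0) * ((n + k).choose (2 * j) : ℤ)) := by
    rw [← Finset.sum_sub_distrib, ← Finset.sum_add_distrib]
    refine Finset.sum_congr rfl fun k _ => ?_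
    rw [ccoef, ← Finset.sum_mul]
    ring
  rw [hsplit]
  -- the double sum
  have hA : (∑ k ∈ Finset.range n, ∑ i ∈ Finset.range (k + 1),
        ((-1 : ℤ) ^ i * (n.choose i : ℤ) * 2 ^ (n - i)) * ((n + k).choose (2 * j) : ℤ))
      = ((n + n).choose (2 * j + 1) : ℤ) := by
    rw [sum_swap_tri (fun i k => ((-1 : ℤ) ^ i * (n.choose i : ℤ) * 2 ^ (n - i))
        * ((n + k).choose (2 * j) : ℤ)) n]
    have hinner : ∀ i ∈ Finset.range n,
        ∑ k ∈ Finset.Ico i n,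
          ((-1 : ℤ) ^ i * (n.choose i : ℤ) * 2 ^ (n - i)) * ((n + k).choose (2 * j) : ℤ)
        = ((-1 : ℤ) ^ i * (n.choose i : ℤ) * 2 ^ (n - i))
            * (((n + n).choose (2 * j + 1) : ℤ) - ((n + i).choose (2 * j + 1) : ℤ)) := by
      intro i hi
      have hi' : i < n := Finset.mem_range.1 hi
      rw [← Finset.mul_sum]
      congr 1
      rw [Finset.sum_Ico_eq_sum_range]
      have : ∀ k, n + (i + k) = (n + i) + k := fun k => by ring
      calc ∑ k ∈ Finset.range (n - i), ((n + (i + k)).choose (2 * j) : ℤ)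
          = ∑ k ∈ Finset.range (n - i), (((n + i) + k).choose (2 * j) : ℤ) := by
            refine Finset.sum_congr rfl fun k _ => by rw [this k]
        _ = (((n + i) + (n - i)).choose (2 * j + 1) : ℤ)
              - ((n + i).choose (2 * j + 1) : ℤ) := hockey (n + i) (2 * j) (n - i)
        _ = ((n + n).choose (2 * j + 1) : ℤ) - ((n + i).choose (2 * j + 1) : ℤ) := by
            rw [show (n + i) + (n - i) = n + n by omega]
    rw [Finset.sum_congr rfl hinner]
    simp only [mul_sub]
    rw [Finset.sum_sub_distrib]
    -- first part
    have h1 : ∑ i ∈ Finset.range n,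
        ((-1 : ℤ) ^ i * (n.choose i : ℤ) * 2 ^ (n - i)) * ((n + n).choose (2 * j + 1) : ℤ)
        = (1 - (-1 : ℤ) ^ n) * ((n + n).choose (2 * j + 1) : ℤ) := by
      rw [← Finset.sum_mul]
      congr 1
      have hb := binom_sum n
      rw [Finset.sum_range_succ] at hb
      simp only [Nat.choose_self, Nat.cast_one, Nat.sub_self, pow_zero] at hb
      linarith
    have h2 : ∑ i ∈ Finset.range n,
        ((-1 : ℤ) ^ i * (n.choose i : ℤ) * 2 ^ (n - i)) * ((n + i).choose (2 * j + 1) : ℤ)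
        = -((-1 : ℤ) ^ n * ((n + n).choose (2 * j + 1) : ℤ)) := by
      have ho := odd_sum_zero n j
      rw [Finset.sum_range_succ] at ho
      simp only [Nat.choose_self, Nat.cast_one, Nat.sub_self, pow_zero] at ho
      linarith
    rw [h1, h2]
    ring
  -- the single sum
  have hB : ∑ k ∈ Finset.range n, ((n + k).choose (2 * j) : ℤ)
      = ((n + n).choose (2 * j + 1) : ℤ) - (n.choose (2 * j + 1) : ℤ) :=
    hockey n (2 * j) n
  -- the delta sum
  have hC : ∑ k ∈ Finset.range n, (if k = 0 then 1 else 0) * ((n + k).choose (2 * j) : ℤ)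
      = (n.choose (2 * j) : ℤ) := by
    simp only [ite_mul, one_mul, zero_mul]
    rw [Finset.sum_ite_eq' (Finset.range n) 0 (fun k => ((n + k).choose (2 * j) : ℤ))]
    rw [if_pos (Finset.mem_range.2 hn)]
    simp
  rw [hA, hB, hC]
  have hP : ((n + 1).choose (2 * j + 1) : ℤ)
      = (n.choose (2 * j) : ℤ) + (n.choose (2 * j + 1) : ℤ) := by
    rw [Nat.choose_succ_succ]; push_cast; ring
  rw [hP]
  ring

def Gmat (n : ℕ) : Matrix (Fin n) (Fin n) ℤ :=
  Matrix.of fun k j => ((n + 1 + k.1).choose (2 * j.1 + 1) : ℤ)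

def Emat (n : ℕ) : Matrix (Fin n) (Fin n) ℤ :=
  Matrix.of fun k j => ((n + k.1).choose (2 * j.1) : ℤ)

def Nmat (n : ℕ) : Matrix (Fin n) (Fin n) ℤ :=
  Matrix.of fun k l => if k.1 = l.1 + 1 then 1 else 0

def Pmat (n : ℕ) : Matrix (Fin n) (Fin n) ℤ := 1 - Nmat n

lemma det_Pmat (n : ℕ) : (Pmat n).det = 1 := by
  have h : (Pmat n).BlockTriangular OrderDual.toDual := by
    intro i j hij
    have hij' : i < j := hij
    have h1 : i ≠ j := ne_of_lt hij'
    have h2 : ¬ (i.1 = j.1 + 1) := by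
      have := Fin.lt_iff_val_lt_val.1 hij'
      omega
    simp [Pmat, Nmat, Matrix.one_apply, h1, h2]
  rw [Matrix.det_of_lowerTriangular _ h]
  have : ∀ i : Fin n, (Pmat n) i i = 1 := by
    intro i
    have : ¬ (i.1 = i.1 + 1) := by omega
    simp [Pmat, Nmat, Matrix.one_apply, this]
  rw [Finset.prod_congr rfl (fun i _ => this i)]
  simp

lemma Nmul_zero (n : ℕ) (M : Matrix (Fin (n+1)) (Fin (n+1)) ℤ) (j : Fin (n+1)) :
    (Nmat (n+1) * M) 0 j = 0 := by
  rw [Matrix.mul_apply]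
  refine Finset.sum_eq_zero fun l _ => ?_
  have : ¬ ((0 : Fin (n+1)).1 = l.1 + 1) := by simp
  simp [Nmat, this]

lemma Nmul_succ (n : ℕ) (M : Matrix (Fin (n+1)) (Fin (n+1)) ℤ) (k : Fin n) (j : Fin (n+1)) :
    (Nmat (n+1) * M) k.succ j = M k.castSucc j := by
  rw [Matrix.mul_apply]
  rw [Finset.sum_eq_single k.castSucc]
  · have : (k.succ).1 = (k.castSucc).1 + 1 := by simp
    simp [Nmat, this]
  · intro l _ hl
    have hkl : ¬ (k.1 = l.1) := by
      intro h
      exact hl (Fin.ext (by simp [Fin.coe_castSucc]; omega))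
    simp [Nmat, hkl]
  · intro h
    exact absurd (Finset.mem_univ _) h

lemma Pmul_zero (n : ℕ) (M : Matrix (Fin (n+1)) (Fin (n+1)) ℤ) (j : Fin (n+1)) :
    (Pmat (n+1) * M) 0 j = M 0 j := by
  rw [Pmat, Matrix.sub_mul, Matrix.one_mul, Matrix.sub_apply, Nmul_zero, sub_zero]

lemma Pmul_succ (n : ℕ) (M : Matrix (Fin (n+1)) (Fin (n+1)) ℤ) (k : Fin n) (j : Fin (n+1)) :
    (Pmat (n+1) * M) k.succ j = M k.succ j - M k.castSucc j := by
  rw [Pmat, Matrix.sub_mul, Matrix.one_mul, Matrix.sub_apply, Nmul_succ]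

/-- Pascal in ℤ, subtraction form. -/
lemma pascal_sub (m t : ℕ) :
    ((m + 1).choose (t + 1) : ℤ) - (m.choose (t + 1) : ℤ) = (m.choose t : ℤ) := by
  rw [Nat.choose_succ_succ]; push_cast; ring

lemma detEG (n : ℕ) : (Emat (n+1)).det = (Gmat n).det := by
  have h1 : (Emat (n+1)).det = (Pmat (n+1) * Emat (n+1)).det := by
    rw [Matrix.det_mul, det_Pmat, one_mul]
  rw [h1, Matrix.det_succ_column_zero]
  rw [Finset.sum_eq_single 0]
  · have hzero : (Pmat (n+1) * Emat (n+1)) 0 0 = 1 := by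
      rw [Pmul_zero]; simp [Emat]
    have hsub : ((Pmat (n+1) * Emat (n+1)).submatrix (0 : Fin (n+1)).succAbove Fin.succ)
        = Gmat n := by
      ext k j
      rw [Matrix.submatrix_apply, Fin.succAbove_zero, Pmul_succ]
      have e1 : (Emat (n+1)) k.succ j.succ
          = (((n + 1 + k.1) + 1).choose ((2 * j.1 + 1) + 1) : ℤ) := by
        simp only [Emat, Matrix.of_apply, Fin.val_succ]
        congr 2
      have e2 : (Emat (n+1)) k.castSucc j.succ
          = (((n + 1 + k.1)).choose ((2 * j.1 + 1) + 1) : ℤ) := by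
        simp only [Emat, Matrix.of_apply, Fin.coe_castSucc, Fin.val_succ]
        congr 2
      rw [e1, e2, pascal_sub]
      rfl
    rw [hzero, hsub]
    simp
  · intro i _ hi
    obtain ⟨k, rfl⟩ := Fin.eq_succ_of_ne_zero hi
    have : (Pmat (n+1) * Emat (n+1)) k.succ 0 = 0 := by
      rw [Pmul_succ]
      simp [Emat]
    rw [this]
    ring
  · intro h
    exact absurd (Finset.mem_univ _) h

lemma detGE (n : ℕ) : (Gmat (n+1)).det = 2 ^ (n+1) * (Emat (n+1)).det := by
  have h1 : (Gmat (n+1)).det = (Pmat (n+1) * Gmat (n+1)).det := by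
    rw [Matrix.det_mul, det_Pmat, one_mul]
  have hA : Pmat (n+1) * Gmat (n+1)
      = (Emat (n+1)).updateRow 0
          (∑ k : Fin (n+1), (fun k : Fin (n+1) => ccoef (n+1) k.1) k • Emat (n+1) k) := by
    ext k j
    rcases Fin.eq_zero_or_eq_succ k with rfl | ⟨k', rfl⟩
    · rw [Pmul_zero, Matrix.updateRow_self]
      have hr : (∑ k : Fin (n+1), (fun k : Fin (n+1) => ccoef (n+1) k.1) k • Emat (n+1) k) j
          = ∑ k : Fin (n+1), ccoef (n+1) k.1 * Emat (n+1) k j := by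
        rw [Finset.sum_apply]
        exact Finset.sum_congr rfl fun k _ => rfl
      rw [hr]
      have hfin : ∑ k : Fin (n+1), ccoef (n+1) k.1 * Emat (n+1) k j
          = ∑ k ∈ Finset.range (n+1), ccoef (n+1) k * (((n+1) + k).choose (2 * j.1) : ℤ) := by
        rw [← Fin.sum_univ_eq_sum_range (fun k => ccoef (n+1) k * (((n+1) + k).choose (2 * j.1) : ℤ))]
        rfl
      rw [hfin, key_row (n+1) j.1 (Nat.succ_pos n)]
      simp only [Gmat, Matrix.of_apply, Fin.val_zero]
    · rw [Pmul_succ, Matrix.updateRow_ne (Fin.succ_ne_zero k')]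
      have e1 : (Gmat (n+1)) k'.succ j
          = ((((n + 1) + 1 + k'.1) + 1).choose ((2 * j.1) + 1) : ℤ) := by
        simp only [Gmat, Matrix.of_apply, Fin.val_succ]
        congr 2
      have e2 : (Gmat (n+1)) k'.castSucc j
          = ((((n + 1) + 1 + k'.1)).choose ((2 * j.1) + 1) : ℤ) := by
        simp only [Gmat, Matrix.of_apply, Fin.coe_castSucc]
      have e3 : (Emat (n+1)) k'.succ j
          = ((((n + 1) + 1 + k'.1)).choose (2 * j.1) : ℤ) := by
        simp only [Emat, Matrix.of_apply, Fin.val_succ]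
        congr 2
        omega
      rw [e1, e2, e3, pascal_sub]
  rw [h1, hA, Matrix.det_updateRow_sum]
  simp only [Fin.val_zero, ccoef_zero]
  rw [smul_eq_mul]

lemma tri_succ (m : ℕ) : (m+1)*(m+2)/2 = m*(m+1)/2 + (m+1) := by
  obtain ⟨k, hk⟩ := Nat.even_mul_succ_self m
  have h2 : (m+1)*(m+2) = m*(m+1) + 2*(m+1) := by ring
  omega

lemma detG_main : ∀ n : ℕ, (Gmat n).det = 2 ^ (n * (n+1) / 2) := by
  intro n
  induction n with
  | zero => simp [Matrix.det_isEmpty]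
  | succ n ih =>
    rw [detGE, detEG, ih, tri_succ n]
    rw [pow_add]
    ring




def Lmat (n : ℕ) : Matrix (Fin n) (Fin n) ℤ :=
  Matrix.of fun i k => (-1 : ℤ) ^ (i.1 + k.1) * (i.1.choose k.1 : ℤ)

lemma det_Lmat (n : ℕ) : (Lmat n).det = 1 := by
  have h : (Lmat n).BlockTriangular OrderDual.toDual := by
    intro i j hij
    have hij' : i < j := hij
    have : i.1 < j.1 := Fin.lt_iff_val_lt_val.1 hij'
    simp [Lmat, Nat.choose_eq_zero_of_lt this]
  rw [Matrix.det_of_lowerTriangular _ h]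
  have hd : ∀ i : Fin n, (Lmat n) i i = 1 := by
    intro i
    have h2 : (-1 : ℤ) ^ (i.1 + i.1) = 1 := by
      rw [← two_mul, pow_mul]
      norm_num
    simp [Lmat, h2, Nat.choose_self]
  rw [Finset.prod_congr rfl (fun i _ => hd i)]
  simp

/-- The determinant of the Lindström–Gessel–Viennot matrix of the order-`n` Novak
half-hexagon, `[C(n+1, 2j-i)]_{i,j=1}^n`, equals `2^{n(n+1)/2}`. -/
theorem half_hexagon_det (n : ℕ) :
    Matrix.det (Matrix.of fun i j : Fin n =>
      (zchoose (n + 1) (2 * (j.1 + 1) - (i.1 + 1)) : ℤ)) = 2 ^ (n * (n + 1) / 2) := by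
  have hfact : (Matrix.of fun i j : Fin n =>
      (zchoose (n + 1) (2 * (j.1 + 1) - (i.1 + 1)) : ℤ)) = Lmat n * Gmat n := by
    ext i j
    rw [Matrix.mul_apply]
    have hterm : ∀ k : Fin n, Lmat n i k * Gmat n k j
        = (-1 : ℤ) ^ (i.1 + k.1) * (i.1.choose k.1 : ℤ)
            * (zchoose (n + 1 + k.1) ((2 * j.1 + 1 : ℕ) : ℤ) : ℤ) := by
      intro k
      rw [zchoose_coe]
      rfl
    rw [Finset.sum_congr rfl fun k _ => hterm k]
    rw [Fin.sum_univ_eq_sum_range (fun k => (-1 : ℤ) ^ (i.1 + k) * (i.1.choose k : ℤ)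
      * (zchoose (n + 1 + k) ((2 * j.1 + 1 : ℕ) : ℤ) : ℤ))]
    have hsubset : Finset.range (i.1 + 1) ⊆ Finset.range n :=
      Finset.range_subset_range.2 i.2
    rw [← Finset.sum_subset hsubset (fun x _ hx => by
      have : i.1 < x := by
        simp only [Finset.mem_range, not_lt] at hx
        omega
      simp [Nat.choose_eq_zero_of_lt this])]
    rw [Tsum_eq i.1 (n + 1) ((2 * j.1 + 1 : ℕ) : ℤ)]
    have harg : ((2 * j.1 + 1 : ℕ) : ℤ) - (i.1 : ℤ) = 2 * ((j.1 : ℤ) + 1) - ((i.1 : ℤ) + 1) := by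
      push_cast; ring
    rw [harg]
    rfl
  rw [hfact, Matrix.det_mul, det_Lmat, one_mul, detG_main]
end

section
/- Let n ≥ 1, N ≥ 1, and let distinct integers y_1 < ... < y_n be given with 1 ≤ y_i ≤ N + i (so that the matrix below is invertible with nonzero determinant). Define M[i][j] = C(N, y_j - i) for 1 ≤ i,j ≤ n. Then det M = (Π_{1≤i<j≤n}(y_j - y_i) · Π_{i=1}^{n}(N+i-1)!) / (Π_{i=1}^{n}(y_i - 1)! · Π_{i=1}^{n}(N + n - y_i)!). -/
/-!
With `x_j = y_j - 1` and `c = N + n - 1`, scaling column `j` by `x_j! (c - x_j)! / N!` turns the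
entry `C(N, x_j - i)` (rows indexed from `0`) into `p_i(x_j)`, also where the binomial coefficient
vanishes; here `p_i(x) = x(x-1)⋯(x-i+1) · (c-x)(c-x-1)⋯(c-x-(n-2-i))` has degree `n - 1`.
Hence `det [p_i(x_j)]` is the Vandermonde determinant of `x` times the determinant of the
coefficient matrix of the `p_i`. That constant is read off at `x = (0, …, n-1)`, where `[p_i(j)]`
is upper triangular with diagonal `i! (c-i)! / N!` and the Vandermonde determinant is `∏ i!`.
-/

open Finset Polynomial Matrix
open scoped Nat

theorem zchoose_sub_mul_factorial_mul_factorial {N a b i j : ℕ} (h : a + b = N + i + j) :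
    zchoose N ((a : ℤ) - i) * a ! * b ! = a.descFactorial i * b.descFactorial j * N ! := by
  rcases lt_or_ge a i with hai | hia
  · rw [zchoose, if_neg (by omega), Nat.descFactorial_eq_zero_iff_lt.mpr hai]
    simp
  rw [zchoose, if_pos (by omega), show ((a : ℤ) - i).toNat = a - i by omega]
  rcases le_or_gt (a - i) N with hN | hN
  · rw [← Nat.factorial_mul_descFactorial hia,
      ← Nat.factorial_mul_descFactorial (show j ≤ b by omega),
      ← Nat.choose_mul_factorial_mul_factorial hN, show b - j = N - (a - i) by omega]
    ring
  · rw [Nat.choose_eq_zero_of_lt hN, Nat.descFactorial_eq_zero_iff_lt.mpr (show b < j by omega)]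
    simp

theorem Matrix.det_of_eval_eq_det_coeff_mul_det_vandermonde {R : Type*} [CommRing R] {n : ℕ}
    (p : Fin n → R[X]) (hp : ∀ i, (p i).natDegree < n) (v : Fin n → R) :
    (of fun i j => (p i).eval (v j)).det =
      (of fun i (k : Fin n) => (p i).coeff k).det * (vandermonde v).det := by
  have hfactor : (of fun i j => (p i).eval (v j)) =
      (of fun i (k : Fin n) => (p i).coeff k) * (vandermonde v)ᵀ := by
    ext i j
    rw [of_apply, eval_eq_sum_range' (hp i), ← Fin.sum_univ_eq_sum_range, mul_apply]
    rfl
  rw [hfactor, det_mul, det_transpose]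

theorem Matrix.det_vandermonde_natCast {R : Type*} [CommRing R] (n : ℕ) :
    (vandermonde fun i : Fin n => (i : R)).det = ∏ i : Fin n, (i ! : R) := by
  cases n with
  | zero => simp
  | succ m =>
    rw [det_vandermonde_id_eq_superFactorial, ← Nat.prod_range_succ_factorial,
      ← Fin.prod_univ_eq_prod_range, Nat.cast_prod]

noncomputable def lgvPoly (c i j : ℕ) : ℚ[X] :=
  descPochhammer ℚ i * (descPochhammer ℚ j).comp (C (c : ℚ) - X)

theorem eval_natCast_lgvPoly {a c : ℕ} (i j : ℕ) (ha : a ≤ c) :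
    (lgvPoly c i j).eval (a : ℚ) = (a.descFactorial i * (c - a).descFactorial j : ℕ) := by
  rw [lgvPoly, eval_mul, eval_comp, eval_sub, eval_C, eval_X, ← Nat.cast_sub ha,
    descPochhammer_eval_eq_descFactorial, descPochhammer_eval_eq_descFactorial, Nat.cast_mul]

theorem natDegree_lgvPoly_le (c i j : ℕ) : (lgvPoly c i j).natDegree ≤ i + j := by
  refine natDegree_mul_le.trans (add_le_add (descPochhammer_natDegree ℚ i).le ?_)
  refine natDegree_comp_le.trans ?_
  have h1 : (C (c : ℚ) - X).natDegree ≤ 1 := (natDegree_sub_le _ _).trans (by simp)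
  simpa [descPochhammer_natDegree] using Nat.mul_le_mul_left j h1

theorem det_eval_natCast_lgvPoly (N n : ℕ) :
    (of fun i j : Fin n => (lgvPoly (N + n - 1) i (n - 1 - i)).eval (j : ℚ)).det =
      ∏ i : Fin n, ((i ! * (N + n - 1 - i).descFactorial (n - 1 - i) : ℕ) : ℚ) := by
  have hentry (i j : Fin n) : (lgvPoly (N + n - 1) i (n - 1 - i)).eval (j : ℚ) =
      ((j.1.descFactorial i * (N + n - 1 - j).descFactorial (n - 1 - i) : ℕ) : ℚ) :=
    eval_natCast_lgvPoly _ _ (by omega)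
  have htriangular : (of fun i j : Fin n =>
      (lgvPoly (N + n - 1) i (n - 1 - i)).eval (j : ℚ)).IsUpperTriangular := by
    intro i j hji
    rw [of_apply, hentry, Nat.descFactorial_eq_zero_iff_lt.mpr (show j.1 < i.1 from hji)]
    simp
  rw [det_of_isUpperTriangular htriangular]
  refine prod_congr rfl fun i _ => ?_
  rw [of_apply, hentry, Nat.descFactorial_self]

theorem prod_factorial_rev (N n : ℕ) :
    ∏ i : Fin n, (N + n - 1 - i)! = ∏ i : Fin n, (N + i)! :=
  Fintype.prod_equiv Fin.revPerm _ _ fun i => by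
    rw [Fin.revPerm_apply, Fin.val_rev]
    congr 1
    omega

theorem det_coeff_lgvPoly_mul_pow (N n : ℕ) :
    (of fun (i k : Fin n) => (lgvPoly (N + n - 1) i (n - 1 - i)).coeff k).det * (N ! : ℚ) ^ n =
      ∏ i : Fin n, ((N + i)! : ℚ) := by
  have hvdm := det_of_eval_eq_det_coeff_mul_det_vandermonde
    (fun i : Fin n => lgvPoly (N + n - 1) i (n - 1 - i))
    (fun i => (natDegree_lgvPoly_le _ _ _).trans_lt (by omega)) (fun j => (j : ℚ))
  rw [det_eval_natCast_lgvPoly, det_vandermonde_natCast] at hvdm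
  have hfact : ∏ i : Fin n, (i ! : ℚ) ≠ 0 := prod_ne_zero_iff.mpr fun i _ => by positivity
  refine mul_right_cancel₀ hfact ?_
  calc _ = (∏ i : Fin n, ((i ! * (N + n - 1 - i).descFactorial (n - 1 - i) : ℕ) : ℚ)) *
        ∏ _i : Fin n, (N ! : ℚ) := by
        rw [hvdm, prod_const, card_univ, Fintype.card_fin]; ring
    _ = (∏ i : Fin n, ((N + n - 1 - i)! : ℚ)) * ∏ i : Fin n, (i ! : ℚ) := by
        rw [← prod_mul_distrib, ← prod_mul_distrib]
        refine prod_congr rfl fun i _ => ?_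
        have hN : N + n - 1 - i - (n - 1 - i) = N := by omega
        rw [← Nat.factorial_mul_descFactorial (show n - 1 - i ≤ N + n - 1 - i by omega), hN]
        push_cast; ring
    _ = _ := by rw [← Nat.cast_prod, prod_factorial_rev, Nat.cast_prod]

theorem zchoose_eq_eval_lgvPoly_mul {N n i a : ℕ} (hi : i < n) (ha : a ≤ N + n - 1) :
    (zchoose N ((a : ℤ) - i) : ℚ) = (lgvPoly (N + n - 1) i (n - 1 - i)).eval (a : ℚ) *
      (N ! / (a ! * (N + n - 1 - a)! : ℚ)) := by
  rw [eval_natCast_lgvPoly _ _ ha, mul_div_assoc', eq_div_iff (by positivity)]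
  have := zchoose_sub_mul_factorial_mul_factorial (N := N) (a := a) (b := N + n - 1 - a) (i := i)
    (j := n - 1 - i) (by omega)
  rw [mul_assoc] at this
  exact_mod_cast this

theorem lgv_binomial_det_general (n N : ℕ) (y : Fin n → ℤ)
    (hy₁ : ∀ i, 1 ≤ y i) (hy₂ : ∀ i, y i ≤ N + (i.1 + 1)) :
    Matrix.det (Matrix.of fun i j : Fin n => (zchoose N (y j - (i.1 + 1)) : ℚ)) =
      ((∏ i : Fin n, ∏ j ∈ Finset.Ioi i, ((y j - y i : ℤ) : ℚ)) *
        ∏ i : Fin n, (Nat.factorial (N + i.1) : ℚ)) /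
      ((∏ i : Fin n, (Nat.factorial (y i - 1).toNat : ℚ)) *
        ∏ i : Fin n, (Nat.factorial ((N : ℤ) + n - y i).toNat : ℚ)) := by
  obtain ⟨a, rfl⟩ : ∃ a : Fin n → ℕ, y = fun j => (a j : ℤ) + 1 :=
    ⟨fun j => (y j - 1).toNat, funext fun j => by
      have := hy₁ j
      show y j = ((y j - 1).toNat : ℤ) + 1
      omega⟩
  have ha (j : Fin n) : a j ≤ N + n - 1 := by
    have hj := hy₂ j
    dsimp only at hj
    omega
  have hM : (of fun i j : Fin n => (zchoose N ((a j : ℤ) + 1 - (i.1 + 1)) : ℚ)) =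
      (of fun i j : Fin n => (lgvPoly (N + n - 1) i (n - 1 - i)).eval (a j : ℚ)) *
        diagonal fun j => (N ! / ((a j)! * (N + n - 1 - a j)! : ℚ)) := by
    ext i j
    rw [mul_diagonal, of_apply, of_apply, add_sub_add_right_eq_sub,
      zchoose_eq_eval_lgvPoly_mul i.2 (ha j)]
  have htoNat (j : Fin n) : ((N : ℤ) + n - ((a j : ℤ) + 1)).toNat = N + n - 1 - a j := by
    have := ha j; omega
  rw [hM, det_mul, det_of_eval_eq_det_coeff_mul_det_vandermonde _
    (fun i => (natDegree_lgvPoly_le _ _ _).trans_lt (by omega)), det_vandermonde, det_diagonal,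
    prod_div_distrib, prod_const, card_univ, Fintype.card_fin, prod_mul_distrib,
    ← det_coeff_lgvPoly_mul_pow]
  simp only [htoNat, add_sub_cancel_right, Int.toNat_natCast, add_sub_add_right_eq_sub]
  push_cast
  ring

/-- Determinant of the Lindström–Gessel–Viennot matrix `[C(N, y_j - i)]`:
`det M = (Π_{i<j}(y_j-y_i) Π (N+i-1)!) / (Π (y_i-1)! Π (N+n-y_i)!)`. -/
theorem lgv_binomial_det (n N : ℕ) (hn : 1 ≤ n) (hN : 1 ≤ N) (y : Fin n → ℤ)
    (hmono : StrictMono y) (hy₁ : ∀ i, 1 ≤ y i) (hy₂ : ∀ i, y i ≤ N + (i.1 + 1)) :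
    Matrix.det (Matrix.of fun i j : Fin n => (zchoose N (y j - (i.1 + 1)) : ℚ)) =
      ((∏ i : Fin n, ∏ j ∈ Finset.Ioi i, ((y j - y i : ℤ) : ℚ)) *
        ∏ i : Fin n, (Nat.factorial (N + i.1) : ℚ)) /
      ((∏ i : Fin n, (Nat.factorial (y i - 1).toNat : ℚ)) *
        ∏ i : Fin n, (Nat.factorial ((N : ℤ) + n - y i).toNat : ℚ)) :=
  lgv_binomial_det_general n N y hy₁ hy₂
end

section
/- For positive integers n, the entry-wise product formula holds: the inverse of the matrix M_HH with M_HH[i][j] = C(n+1, 2j - i) (1 ≤ i,j ≤ n) is given by [M_HH^{-1}]_{i,j} = C(2n, 2i-1)^{-1} Σ_{k=1}^{j} C(2n, k-1) C(n+j-k, j-k) (-1)^{k+j} Π_{l≠i} (k-2l)/(2i-2l). -/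
/-! Write `L_m(k) = ∏_{l ≠ m} (k - 2l)/(2m - 2l)` for the Lagrange basis on the nodes
`2, 4, …, 2n`. Expanding `N`, the entry `(M N)_{ij}` is `Σ_k a_{kj} Σ_m f_i(2m) L_m(k)` with
`a_{kj} = C(2n, k-1) C(n+j-k, j-k) (-1)^(k+j)` and `f_i(x) = C(n+1, x-i) / C(2n, x-1)`.
For `1 ≤ x ≤ 2n`, `f_i(x) = (x-1)^{(i-1)} (2n+1-x)^{(n-i)} / (2n)^{(n-1)}` (falling
factorials) is a polynomial of degree `n - 1` in `x`, so the inner sum is just `f_i(k)`.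
The factor `C(2n, k-1)` then cancels and `(M N)_{ij} = Σ_k (-1)^(j-k) C(n+j-k, n) C(n+1, k-i)`,
which is the Chu–Vandermonde expansion of `C((n+1) - (n+1), j-i) = δ_{ij}`. -/

open Finset Polynomial

theorem Nat.choose_mul_descFactorial_mul_descFactorial {a b p q : ℕ}
    (hp : p ≤ a) (hq : q ≤ b) :
    (a + b).choose a * (a.descFactorial p * b.descFactorial q) =
      (a + b - (p + q)).choose (a - p) * (a + b).descFactorial (p + q) := by
  refine Nat.eq_of_mul_eq_mul_right (Nat.mul_pos (a - p).factorial_pos (b - q).factorial_pos) ?_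
  have hab : a + b - (p + q) - (a - p) = b - q := by omega
  calc _ = (a + b).choose a * ((a - p).factorial * a.descFactorial p) *
        ((b - q).factorial * b.descFactorial q) := by ring
    _ = (a + b).choose a * a.factorial * (a + b - a).factorial := by
        rw [Nat.factorial_mul_descFactorial hp, Nat.factorial_mul_descFactorial hq,
          Nat.add_sub_cancel_left]
    _ = (a + b - (p + q)).choose (a - p) * (a - p).factorial *
          (a + b - (p + q) - (a - p)).factorial * (a + b).descFactorial (p + q) := by
        rw [Nat.choose_mul_factorial_mul_factorial (by omega),
          Nat.choose_mul_factorial_mul_factorial (by omega),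
          Nat.factorial_mul_descFactorial (by omega)]
    _ = _ := by rw [hab]; ring

/-- Chu–Vandermonde for `C((n+1) + (-(n+1)), s)`, using `C(-(n+1), u) = (-1)^u C(n+u, n)`. -/
theorem Int.sum_antidiagonal_choose_mul_neg_one_pow_mul_choose (n s : ℕ) :
    ∑ p ∈ antidiagonal s, ((n + 1).choose p.1 : ℤ) * ((-1) ^ p.2 * (n + p.2).choose n) =
      if s = 0 then 1 else 0 := by
  have h := Ring.add_choose_eq (r := ((n + 1 : ℕ) : ℤ)) (s := -((n + 1 : ℕ) : ℤ)) s
    (Commute.all _ _)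
  rw [add_neg_cancel, Ring.choose_zero_ite] at h
  rw [h]
  refine sum_congr rfl fun p _ => ?_
  rw [Ring.choose_natCast, Ring.choose_neg,
    show ((n + 1 : ℕ) : ℤ) + p.2 - 1 = ((n + p.2 : ℕ) : ℤ) by push_cast; ring,
    Ring.choose_natCast, Nat.choose_symm_add, Units.smul_def, Int.coe_negOnePow_natCast,
    smul_eq_mul]

theorem Lagrange.eval_eq_sum_eval_mul_prod_div {F ι : Type*} [Field F] [DecidableEq ι]
    {s : Finset ι} {v : ι → F} (hvs : Set.InjOn v s) {f : F[X]} (hf : f.degree < #s) (x : F) :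
    f.eval x = ∑ i ∈ s, f.eval (v i) * ∏ j ∈ s.erase i, (x - v j) / (v i - v j) := by
  conv_lhs => rw [eq_interpolate hvs hf]
  rw [interpolate_apply, eval_finsetSum]
  refine sum_congr rfl fun i _ => ?_
  rw [eval_mul, eval_C, Lagrange.basis, eval_prod]
  congr 1
  refine prod_congr rfl fun j _ => ?_
  rw [basisDivisor, eval_mul, eval_C, eval_sub, eval_X, eval_C, div_eq_inv_mul]

theorem zchoose_of_neg {m : ℕ} {k : ℤ} (h : k < 0) : zchoose m k = 0 := by
  simp [zchoose, not_le.mpr h]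

theorem zchoose_natCast_sub {m x i : ℕ} (h : i ≤ x) : zchoose m (x - i) = m.choose (x - i) := by
  simp [zchoose, h]

namespace HalfHexagon

noncomputable def rowPoly (n i : ℕ) : ℚ[X] :=
  C ((2 * n).descFactorial (n - 1) : ℚ)⁻¹ *
    ((descPochhammer ℚ (i - 1)).comp (X - 1) *
      (descPochhammer ℚ (n - i)).comp (C (2 * n + 1 : ℚ) - X))

theorem degree_rowPoly_lt {n i : ℕ} (hi : 1 ≤ i) (hin : i ≤ n) :
    (rowPoly n i).degree < n := by
  have h1 : ((X : ℚ[X]) - 1).natDegree = 1 := by simpa using natDegree_X_sub_C (1 : ℚ)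
  have h2 : (C (2 * n + 1 : ℚ) - X).natDegree = 1 := by
    rw [← neg_sub, natDegree_neg, natDegree_X_sub_C]
  refine (degree_le_natDegree).trans_lt ?_
  rw [Nat.cast_lt]
  calc (rowPoly n i).natDegree ≤ (i - 1) * 1 + (n - i) * 1 := by
        refine (natDegree_C_mul_le _ _).trans (natDegree_mul_le.trans (add_le_add ?_ ?_)) <;>
          refine natDegree_comp_le.trans ?_ <;> rw [descPochhammer_natDegree] <;>
          simp only [h1, h2, le_refl]
    _ < n := by omega

theorem eval_rowPoly_natCast (n i : ℕ) {x : ℕ} (hx : 1 ≤ x) (hxn : x ≤ 2 * n + 1) :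
    (rowPoly n i).eval (x : ℚ) =
      ((x - 1).descFactorial (i - 1) * (2 * n + 1 - x).descFactorial (n - i) : ℕ) /
        (2 * n).descFactorial (n - 1) := by
  simp only [rowPoly, eval_mul, eval_C, eval_comp, eval_sub, eval_X, eval_one]
  rw [show (x : ℚ) - 1 = ((x - 1 : ℕ) : ℚ) by rw [Nat.cast_sub hx, Nat.cast_one],
    show (2 * n + 1 : ℚ) - x = ((2 * n + 1 - x : ℕ) : ℚ) by push_cast [hxn]; ring,
    descPochhammer_eval_eq_descFactorial, descPochhammer_eval_eq_descFactorial]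
  push_cast
  ring

theorem eval_rowPoly {n i x : ℕ} (hi : 1 ≤ i) (hin : i ≤ n) (hx : 1 ≤ x)
    (hxn : x ≤ 2 * n) :
    (rowPoly n i).eval (x : ℚ) = zchoose (n + 1) (x - i) / (2 * n).choose (x - 1) := by
  rw [eval_rowPoly_natCast n i hx (by omega)]
  rcases lt_or_ge x i with hxi | hix
  · rw [Nat.descFactorial_eq_zero_iff_lt.mpr (by omega), zchoose_of_neg (by omega)]
    simp
  rw [zchoose_natCast_sub hix]
  rcases lt_or_ge (n + i + 1) x with hx' | hx'
  · rw [Nat.descFactorial_eq_zero_iff_lt.mpr (by omega : 2 * n + 1 - x < n - i),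
      Nat.choose_eq_zero_of_lt (by omega : n + 1 < x - i)]
    simp
  have key := Nat.choose_mul_descFactorial_mul_descFactorial (a := x - 1) (b := 2 * n + 1 - x)
    (p := i - 1) (q := n - i) (by omega) (by omega)
  rw [show x - 1 + (2 * n + 1 - x) = 2 * n by omega,
    show 2 * n - (i - 1 + (n - i)) = n + 1 by omega,
    show x - 1 - (i - 1) = x - i by omega, show i - 1 + (n - i) = n - 1 by omega] at key
  have hc : ((2 * n).choose (x - 1) : ℚ) ≠ 0 := by
    exact_mod_cast (Nat.choose_pos (by omega)).ne'
  have hd : ((2 * n).descFactorial (n - 1) : ℚ) ≠ 0 := by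
    exact_mod_cast (Nat.descFactorial_pos.mpr (by omega)).ne'
  rw [div_eq_div_iff hd hc]
  exact_mod_cast (mul_comm _ _).trans key

theorem sum_zchoose_mul_lagrange (n : ℕ) (i : Fin n) {k : ℕ} (hk : 1 ≤ k)
    (hkn : k ≤ 2 * n) :
    ∑ m : Fin n, (zchoose (n + 1) (2 * (m.1 + 1) - (i.1 + 1)) : ℚ) *
        ((2 * n).choose (2 * (m.1 + 1) - 1) : ℚ)⁻¹ *
        ∏ l ∈ univ.erase m,
          ((k : ℚ) - 2 * (l.1 + 1)) / (2 * ((m.1 : ℚ) + 1) - 2 * (l.1 + 1))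
      = zchoose (n + 1) (k - (i.1 + 1)) / (2 * n).choose (k - 1) := by
  have hnodes : Set.InjOn (fun l : Fin n => 2 * ((l.1 : ℚ) + 1)) (univ : Finset (Fin n)) :=
    fun a _ b _ h => Fin.ext (by simpa using h)
  have hdeg : (rowPoly n (i.1 + 1)).degree < #(univ : Finset (Fin n)) := by
    simpa using degree_rowPoly_lt (Nat.le_add_left 1 i.1) i.isLt
  have hk' := eval_rowPoly (Nat.le_add_left 1 i.1) i.isLt hk hkn
  push_cast at hk'
  rw [← hk', Lagrange.eval_eq_sum_eval_mul_prod_div hnodes hdeg]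
  refine sum_congr rfl fun m _ => ?_
  have hm := eval_rowPoly (x := 2 * (m.1 + 1)) (Nat.le_add_left 1 i.1) i.isLt
    (by omega) (by omega)
  push_cast at hm
  simp only [hm, div_eq_mul_inv]

theorem sum_choose_mul_neg_one_pow_mul_zchoose (n : ℕ) {I J : ℕ} (hI : 1 ≤ I) :
    ∑ k ∈ Icc 1 J, ((n + J - k).choose (J - k) : ℚ) * (-1) ^ (k + J) * zchoose (n + 1) (k - I)
      = if I = J then 1 else 0 := by
  have hlow : ∀ k, k < I → zchoose (n + 1) (k - I) = 0 :=
    fun k hk => zchoose_of_neg (by omega)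
  rcases lt_or_ge J I with hJI | hIJ
  · rw [if_neg hJI.ne', sum_eq_zero fun k hk => by simp [hlow k (by simp at hk; omega)]]
  obtain ⟨s, rfl⟩ := Nat.exists_eq_add_of_le hIJ
  have hvdm := congrArg (Int.cast : ℤ → ℚ)
    (Int.sum_antidiagonal_choose_mul_neg_one_pow_mul_choose n s)
  rw [Nat.sum_antidiagonal_eq_sum_range_succ_mk] at hvdm
  push_cast at hvdm
  rw [← sum_subset (Icc_subset_Icc hI le_rfl) fun k hk hk' => by
      simp only [mem_Icc] at hk hk'; simp [hlow k (by omega)],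
    ← Ico_add_one_right_eq_Icc, sum_Ico_eq_sum_range, show I + s + 1 - I = s + 1 by omega]
  simp only [show (I = I + s) ↔ s = 0 by omega, ← hvdm]
  refine sum_congr rfl fun t ht => ?_
  rw [mem_range] at ht
  rw [zchoose_natCast_sub (Nat.le_add_right I t), Nat.add_sub_cancel_left,
    show n + (I + s) - (I + t) = n + (s - t) by omega, show I + s - (I + t) = s - t by omega,
    Nat.choose_symm_add, show I + t + (I + s) = s - t + 2 * (I + t) by omega, pow_add, pow_mul,
    neg_one_sq, one_pow]
  ring

end HalfHexagon

theorem half_hexagon_inverse_general (n : ℕ)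
    (M N : Matrix (Fin n) (Fin n) ℚ)
    (hM : ∀ i j, M i j = (zchoose (n + 1) (2 * (j.1 + 1) - (i.1 + 1)) : ℚ))
    (hN : ∀ i j, N i j = ((Nat.choose (2 * n) (2 * (i.1 + 1) - 1) : ℚ))⁻¹ *
      ∑ k ∈ Finset.Icc 1 (j.1 + 1),
        (Nat.choose (2 * n) (k - 1) : ℚ) *
        (Nat.choose (n + (j.1 + 1) - k) ((j.1 + 1) - k) : ℚ) *
        (-1) ^ (k + (j.1 + 1)) *
        ∏ l ∈ Finset.univ.erase i,
          ((k : ℚ) - 2 * (l.1 + 1)) / (2 * ((i.1 : ℚ) + 1) - 2 * (l.1 + 1))) :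
    M * N = 1 ∧ N * M = 1 := by
  have hMN : M * N = 1 := by
    ext i j
    calc (M * N) i j
        = ∑ k ∈ Icc 1 (j.1 + 1), ((2 * n).choose (k - 1) *
            (n + (j.1 + 1) - k).choose (j.1 + 1 - k) * (-1) ^ (k + (j.1 + 1)) : ℚ) *
            ∑ m : Fin n, (zchoose (n + 1) (2 * (m.1 + 1) - (i.1 + 1)) : ℚ) *
              ((2 * n).choose (2 * (m.1 + 1) - 1) : ℚ)⁻¹ *
              ∏ l ∈ univ.erase m,
                ((k : ℚ) - 2 * (l.1 + 1)) / (2 * ((m.1 : ℚ) + 1) - 2 * (l.1 + 1)) := by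
          simp only [Matrix.mul_apply, hM, hN, mul_sum]
          rw [sum_comm]
          exact sum_congr rfl fun k _ => sum_congr rfl fun m _ => by ring
      _ = ∑ k ∈ Icc 1 (j.1 + 1), ((n + (j.1 + 1) - k).choose (j.1 + 1 - k) : ℚ) *
            (-1) ^ (k + (j.1 + 1)) * zchoose (n + 1) (k - ((i.1 + 1 : ℕ) : ℤ)) := by
          refine sum_congr rfl fun k hk => ?_
          rw [mem_Icc] at hk
          have hc : ((2 * n).choose (k - 1) : ℚ) ≠ 0 := by
            exact_mod_cast (Nat.choose_pos (by omega)).ne'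
          rw [HalfHexagon.sum_zchoose_mul_lagrange n i hk.1 (by omega)]
          push_cast
          field_simp
      _ = (1 : Matrix (Fin n) (Fin n) ℚ) i j := by
          rw [HalfHexagon.sum_choose_mul_neg_one_pow_mul_zchoose n (Nat.le_add_left 1 i.1),
            Matrix.one_apply]
          simp [Fin.ext_iff]
  exact ⟨hMN, mul_eq_one_comm.mp hMN⟩

/-- The explicit inverse of the Lindström–Gessel–Viennot matrix
`M_HH = [C(n+1, 2j-i)]_{i,j=1}^n` of the order-`n` Novak half-hexagon:
`[M_HH⁻¹]_{i,j} = C(2n,2i-1)⁻¹ Σ_{k=1}^j C(2n,k-1) C(n+j-k,j-k)(-1)^{k+j}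
Π_{l≠i}(k-2l)/(2i-2l)`. -/
theorem half_hexagon_inverse (n : ℕ) (hn : 1 ≤ n)
    (M N : Matrix (Fin n) (Fin n) ℚ)
    (hM : ∀ i j, M i j = (zchoose (n + 1) (2 * (j.1 + 1) - (i.1 + 1)) : ℚ))
    (hN : ∀ i j, N i j = ((Nat.choose (2 * n) (2 * (i.1 + 1) - 1) : ℚ))⁻¹ *
      ∑ k ∈ Finset.Icc 1 (j.1 + 1),
        (Nat.choose (2 * n) (k - 1) : ℚ) *
        (Nat.choose (n + (j.1 + 1) - k) ((j.1 + 1) - k) : ℚ) *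
        (-1) ^ (k + (j.1 + 1)) *
        ∏ l ∈ Finset.univ.erase i,
          ((k : ℚ) - 2 * (l.1 + 1)) / (2 * ((i.1 : ℚ) + 1) - 2 * (l.1 + 1))) :
    M * N = 1 ∧ N * M = 1 :=
  half_hexagon_inverse_general n M N hM hN
end
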